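/- arXiv:2401.14577 — 3 statements merged into one kernel-verified Lean document; each statement's English description precedes it below -/
import Mathlib

section
/- Let T be a finite rooted tree where every internal vertex has exactly β ≥ 2 children. For u, v ∈ V(T), let d(v,u) be the graph distance from v to u if u is a descendant of v (including u = v, with distance 0), and minus the graph distance otherwise. Define Ext_T(F)(u) = Σ_{v ∈ V(T)} F(v) · β^{−max(0, d(v,u))}. Then for every F : V(T) → ℝ, the function Ext_T(F) is consistent: Ext_T(F)(v) = Σ_{u ∈ children(v)} Ext_T(F)(u) for every internal vertex v. -/
open scoped BigOperators

/-!
Writing `Ext_T(F)(u) = Σ_v F(v) · w(v, u)`, it suffices that each kernel `u ↦ w(v, u)` is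
consistent. If `v` is an ancestor of `u`, each of the `β` children of `u` carries one more
factor `β⁻¹`. Otherwise `w(v, ·)` is the indicator of the ancestors of `v`, and a vertex is a
strict ancestor of `v` exactly when precisely one of its children is an ancestor of `v`.
-/

/-- Vertex set of the complete β-ary rooted tree of depth `h`: words over `Fin β`
of length at most `h`. The root is `[]`; the children of an internal vertex `u`
(one with `u.length < h`) are the words `u ++ [i]`, `i : Fin β`; `u` is a
descendant of `v` iff `v` is a prefix of `u`. -/
noncomputable def verts (β h : ℕ) : Finset (List (Fin β)) :=
  (Finset.range (h + 1)).biUnion fun k =>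
    (Finset.univ : Finset (List.Vector (Fin β) k)).image Subtype.val

/-- The consistent extension `Ext_T(F)(u) = Σ_v F(v)·β^{-max(0,d(v,u))}`, where
`d(v,u)` is the signed tree distance: for `u` a descendant of `v` the weight is
`β^{-(graph distance)}`; for `u` a strict ancestor of `v` it is `β^0 = 1`
(as `max(0, d(v,u)) = 0` when `d(v,u) < 0`); incomparable vertices contribute 0. -/
noncomputable def extT (β h : ℕ) (F : List (Fin β) → ℝ) (u : List (Fin β)) : ℝ :=
  ∑ v ∈ verts β h, F v *
    (if v <+: u then (β : ℝ) ^ (-((u.length : ℤ) - (v.length : ℤ)))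
     else if u <+: v then 1 else 0)

namespace TreeExtension

variable {α : Type*} [DecidableEq α]

noncomputable def weight (b : ℝ) (v u : List α) : ℝ :=
  if v <+: u then b ^ (-((u.length : ℤ) - (v.length : ℤ))) else if u <+: v then 1 else 0

theorem weight_of_prefix {b : ℝ} {v u : List α} (h : v <+: u) :
    weight b v u = b ^ (-((u.length : ℤ) - (v.length : ℤ))) :=
  if_pos h

theorem weight_of_not_prefix {b : ℝ} {v u : List α} (h : ¬ v <+: u) :
    weight b v u = if u <+: v then 1 else 0 :=
  if_neg h

theorem weight_of_prefix_right {b : ℝ} {v u : List α} (h : u <+: v) : weight b v u = 1 := by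
  by_cases hv : v <+: u
  · rw [weight_of_prefix hv, le_antisymm h.length_le hv.length_le, sub_self, neg_zero, zpow_zero]
  · rw [weight_of_not_prefix hv, if_pos h]

theorem weight_append_singleton_of_not_prefix {b : ℝ} {v u : List α} (hv : ¬ v <+: u) (a : α) :
    weight b v (u ++ [a]) = if u ++ [a] <+: v then 1 else 0 := by
  split_ifs with h
  · exact weight_of_prefix_right h
  · have hv' : ¬ v <+: u ++ [a] := by
      rw [List.prefix_concat_iff]
      rintro (rfl | h')
      exacts [h List.prefix_rfl, hv h']
    rw [weight_of_not_prefix hv', if_neg h]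

theorem sum_ite_append_singleton_prefix [Fintype α] {v u : List α}
    (hv : ¬ v <+: u) :
    ∑ a : α, (if u ++ [a] <+: v then (1 : ℝ) else 0) = if u <+: v then 1 else 0 := by
  split_ifs with hu
  · obtain ⟨t, rfl⟩ := hu
    obtain ⟨c, w, rfl⟩ : ∃ c w, t = c :: w :=
      List.exists_cons_of_ne_nil fun ht => hv (by simp [ht])
    simp only [List.prefix_append_right_inj, List.cons_prefix_cons, List.nil_prefix, and_true]
    exact Finset.sum_ite_eq' _ _ _ |>.trans (if_pos (Finset.mem_univ c))
  · exact Finset.sum_eq_zero fun a _ =>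
      if_neg fun h => hu ((List.prefix_append u [a]).trans h)

theorem weight_eq_sum_append_singleton [Fintype α] [Nonempty α] (v u : List α) :
    weight (Fintype.card α) v u = ∑ a : α, weight (Fintype.card α) v (u ++ [a]) := by
  by_cases hv : v <+: u
  · have hb : (Fintype.card α : ℝ) ≠ 0 := by positivity
    simp only [weight_of_prefix (hv.trans (List.prefix_append u _)), weight_of_prefix hv,
      List.length_append, List.length_singleton, Finset.sum_const, Finset.card_univ, nsmul_eq_mul]
    rw [show -(((u.length + 1 : ℕ) : ℤ) - v.length) = -((u.length : ℤ) - v.length) - 1 by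
      push_cast; ring, zpow_sub_one₀ hb]
    field_simp
  · simp only [weight_append_singleton_of_not_prefix hv, sum_ite_append_singleton_prefix hv,
      weight_of_not_prefix hv]

end TreeExtension

open TreeExtension in
theorem stmt_4_general (β h : ℕ) (hβ : 2 ≤ β) (F : List (Fin β) → ℝ)
    (u : List (Fin β)) :
    extT β h F u = ∑ i : Fin β, extT β h F (u ++ [i]) := by
  have : Nonempty (Fin β) := ⟨⟨0, by omega⟩⟩
  have hweight (v : List (Fin β)) : weight β v u = ∑ i, weight β v (u ++ [i]) := by
    simpa only [Fintype.card_fin] using weight_eq_sum_append_singleton v u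
  change ∑ v ∈ verts β h, F v * weight β v u =
    ∑ i, ∑ v ∈ verts β h, F v * weight β v (u ++ [i])
  rw [Finset.sum_comm]
  exact Finset.sum_congr rfl fun v _ => by rw [hweight, Finset.mul_sum]

/-- For every `F : V(T) → ℝ` the function `Ext_T(F)` is consistent: at every internal
vertex its value is the sum of the values at the children. -/
theorem stmt_4 (β h : ℕ) (hβ : 2 ≤ β) (F : List (Fin β) → ℝ)
    (u : List (Fin β)) (hu : u ∈ verts β h) (hlen : u.length < h) :
    extT β h F u = ∑ i : Fin β, extT β h F (u ++ [i]) :=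
  stmt_4_general β h hβ F u
end

section
/- Let X be a Laplace random variable with scale λ > 0 (density (1/(2λ))e^{−|x|/λ}). Define ρ_{λ,θ}(x) = ln( P{x + X > θ} / P{x − 1 + X > θ} ). Then for all real x, ρ_{λ,θ}(x) ≤ ρ⊤_{λ,θ}(x), where ρ⊤_{λ,θ}(x) = 1/λ if x < θ + 1 and ρ⊤_{λ,θ}(x) = (1/λ)·exp((θ + 1 − x)/λ) otherwise. -/
/-- Survival function of the centered Laplace distribution with scale `l`:
`P{Lap(l) > s} = (1/2)e^{-s/l}` for `s ≥ 0`, and `1 - (1/2)e^{s/l}` for `s < 0`. -/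
noncomputable def lapSF (l s : ℝ) : ℝ :=
  if 0 ≤ s then (1 / 2) * Real.exp (-s / l) else 1 - (1 / 2) * Real.exp (s / l)

/-- `ρ_{λ,θ}(x) = ln( P{x + Lap(λ) > θ} / P{x - 1 + Lap(λ) > θ} )`. -/
noncomputable def rho (l θ x : ℝ) : ℝ :=
  Real.log (lapSF l (θ - x) / lapSF l (θ - (x - 1)))

/-- `ρ⊤_{λ,θ}(x) = 1/λ` if `x < θ + 1`, and `(1/λ)·exp((θ+1-x)/λ)` otherwise. -/
noncomputable def rhoTop (l θ x : ℝ) : ℝ :=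
  if x < θ + 1 then 1 / l else (1 / l) * Real.exp ((θ + 1 - x) / l)

lemma lapSF_pos (l s : ℝ) (hl : 0 < l) : 0 < lapSF l s := by
  unfold lapSF
  split_ifs with h
  · positivity
  · push_neg at h
    have : Real.exp (s / l) < 1 := by
      rw [Real.exp_lt_one_iff]
      exact div_neg_of_neg_of_pos h hl
    nlinarith

lemma lapSF_nonpos (l s : ℝ) (h : s ≤ 0) :
    lapSF l s = 1 - 1 / 2 * Real.exp (s / l) := by
  unfold lapSF
  split_ifs with h'
  · have : s = 0 := le_antisymm h h'
    simp [this]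
    norm_num
  · rfl

/-- For all real `x`, `ρ_{λ,θ}(x) ≤ ρ⊤_{λ,θ}(x)`. -/
theorem stmt_5 (l θ : ℝ) (hl : 0 < l) : ∀ x : ℝ, rho l θ x ≤ rhoTop l θ x := by
  intro x
  have hA := lapSF_pos l (θ - x) hl
  have hB := lapSF_pos l (θ - (x - 1)) hl
  rw [rho, Real.log_le_iff_le_exp (div_pos hA hB), div_le_iff₀ hB]
  rw [show θ - (x - 1) = θ - x + 1 from by ring]
  by_cases h1 : x < θ + 1
  · rw [rhoTop, if_pos h1]
    have hE2 : Real.exp (1 / l) * (1 / 2 * Real.exp (-(θ - x + 1) / l))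
        = 1 / 2 * Real.exp (-(θ - x) / l) := by
      rw [mul_left_comm, ← Real.exp_add]
      congr 2
      ring
    by_cases h2 : 0 ≤ θ - x
    · rw [lapSF, if_pos h2, lapSF, if_pos (by linarith : (0:ℝ) ≤ θ - x + 1), hE2]
    · push_neg at h2
      rw [lapSF, if_neg (not_le.mpr h2), lapSF,
        if_pos (by linarith : (0:ℝ) ≤ θ - x + 1), hE2]
      have hE : Real.exp ((θ - x) / l) * Real.exp (-(θ - x) / l) = 1 := by
        rw [← Real.exp_add]
        rw [show (θ - x) / l + -(θ - x) / l = 0 from by ring, Real.exp_zero]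
      nlinarith [sq_nonneg (1 - Real.exp ((θ - x) / l)),
        Real.exp_pos ((θ - x) / l), Real.exp_pos (-(θ - x) / l)]
  · push_neg at h1
    rw [rhoTop, if_neg (not_lt.mpr h1),
      show θ + 1 - x = θ - x + 1 from by ring]
    rw [lapSF_nonpos l (θ - x) (by linarith), lapSF_nonpos l (θ - x + 1) (by linarith)]
    set v := Real.exp ((θ - x + 1) / l) with hv_def
    have hv : 0 < v := Real.exp_pos _
    have hv1 : v ≤ 1 := by
      rw [hv_def, Real.exp_le_one_iff]
      exact div_nonpos_of_nonpos_of_nonneg (by linarith) hl.le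
    have hu : Real.exp ((θ - x) / l) = v * Real.exp (-(1 / l)) := by
      rw [hv_def, ← Real.exp_add]
      congr 1
      ring
    have hc : 1 - 1 / l ≤ Real.exp (-(1 / l)) := by
      have := Real.add_one_le_exp (-(1 / l)); linarith
    have hw : 0 < 1 / l := by positivity
    have hexp : 1 + 1 / l * v ≤ Real.exp (1 / l * v) := by
      have := Real.add_one_le_exp (1 / l * v); linarith
    have h3 : (1 + 1 / l * v) * (1 - 1 / 2 * v) ≤ Real.exp (1 / l * v) * (1 - 1 / 2 * v) :=
      mul_le_mul_of_nonneg_right hexp (by linarith)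
    rw [hu]
    nlinarith [h3, mul_nonneg (mul_nonneg hw.le hv.le) (by linarith : (0:ℝ) ≤ 1 - v),
      mul_nonneg hv.le (by linarith : (0:ℝ) ≤ Real.exp (-(1 / l)) - (1 - 1 / l))]
end

section
/- Let λ > 0, δ > 0, θ ∈ ℝ, and let b₁ ≥ b₂ ≥ … ≥ b_m be reals with b_{i−1} ≥ b_i + δ for 2 ≤ i ≤ m and b_{m−1} ≥ θ + 1 (when m ≥ 2). Then Σ_{i=2}^{m} ρ⊤_{λ,θ}(b_i) ≤ (1/λ) + (1/λ)·(1/(1 − e^{−δ/λ})) = (1/λ)·(2e^{δ/λ} − 1)/(e^{δ/λ} − 1), where ρ⊤_{λ,θ}(x) = 1/λ for x < θ+1 and (1/λ)e^{(θ+1−x)/λ} otherwise. -/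
open scoped BigOperators

/-!
The last term `ρ⊤(b_m)` is at most `1/λ`. For `2 ≤ i ≤ m - 1`, the decrements of at least `δ`
give `b_i ≥ b_{m-1} + (m-1-i)δ ≥ θ + 1 + (m-1-i)δ`, so `ρ⊤(b_i) ≤ (1/λ) r^{m-1-i}` with
`r = e^{-δ/λ} < 1`; these terms are dominated by the full geometric series `(1/λ)/(1 - r)`.
-/

open Finset Real

theorem add_mul_le_of_succ_add_le {b : ℕ → ℝ} {δ : ℝ} {a n : ℕ}
    (h : ∀ j, a ≤ j → j < n → b (j + 1) + δ ≤ b j) {i d : ℕ} (hi : a ≤ i) (hd : i + d ≤ n) :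
    b (i + d) + d * δ ≤ b i := by
  induction d with
  | zero => simp
  | succ d ih =>
    have hstep := h (i + d) (by omega) (by omega)
    rw [← add_assoc]
    push_cast
    linarith [ih (by omega)]

theorem sum_pow_le_inv_one_sub {ι : Type*} {r : ℝ} (h0 : 0 ≤ r) (h1 : r < 1)
    {s : Finset ι} {f : ι → ℕ} (hf : Set.InjOn f s) :
    ∑ i ∈ s, r ^ f i ≤ (1 - r)⁻¹ := by
  classical
  calc ∑ i ∈ s, r ^ f i = ∑ k ∈ s.image f, r ^ k := (sum_image hf).symm
    _ ≤ ∑' k, r ^ k :=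
      (summable_geometric_of_lt_one h0 h1).sum_le_tsum _ fun _ _ => by positivity
    _ = (1 - r)⁻¹ := tsum_geometric_of_lt_one h0 h1

theorem rhoTop_le_one_div {l : ℝ} (hl : 0 ≤ l) (θ x : ℝ) : rhoTop l θ x ≤ 1 / l := by
  unfold rhoTop
  split_ifs with hx
  · rfl
  · have hexp : exp ((θ + 1 - x) / l) ≤ 1 :=
      exp_le_one_iff.mpr (div_nonpos_of_nonpos_of_nonneg (by linarith) hl)
    exact mul_le_of_le_one_right (by positivity) hexp

theorem rhoTop_le_one_div_mul_pow {l δ θ x : ℝ} (hl : 0 ≤ l) (hδ : 0 ≤ δ) {k : ℕ}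
    (hx : θ + 1 + k * δ ≤ x) : rhoTop l θ x ≤ 1 / l * exp (-δ / l) ^ k := by
  have hkδ : 0 ≤ (k : ℝ) * δ := by positivity
  rw [rhoTop, if_neg (by linarith), ← exp_nat_mul, ← mul_div_assoc]
  gcongr
  linarith

theorem sum_rhoTop_le {l δ θ : ℝ} (hl : 0 < l) (hδ : 0 < δ) {m : ℕ} {b : ℕ → ℝ}
    (hdec : ∀ i : ℕ, 2 ≤ i → i ≤ m → b i + δ ≤ b (i - 1))
    (hlast : 2 ≤ m → θ + 1 ≤ b (m - 1)) :
    ∑ i ∈ Icc 2 m, rhoTop l θ (b i) ≤ 1 / l + 1 / l * (1 - exp (-δ / l))⁻¹ := by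
  set r := exp (-δ / l)
  have hr1 : r < 1 := exp_lt_one_iff.mpr (div_neg_of_neg_of_pos (by linarith) hl)
  rcases lt_or_ge m 2 with hm | hm
  · rw [Icc_eq_empty (by omega), sum_empty]
    positivity
  obtain ⟨n, rfl⟩ : ∃ n, m = n + 1 := ⟨m - 1, by omega⟩
  have hstep : ∀ j, 1 ≤ j → j < n + 1 → b (j + 1) + δ ≤ b j := fun j hj hjn => by
    simpa using hdec (j + 1) (by omega) (by omega)
  have hinner : ∀ i ∈ Icc 2 n, rhoTop l θ (b i) ≤ 1 / l * r ^ (n - i) := by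
    intro i hi
    obtain ⟨hi2, hin⟩ := mem_Icc.mp hi
    have hbn : θ + 1 ≤ b n := by simpa using hlast hm
    have hchain : b n + (n - i : ℕ) * δ ≤ b i := by
      simpa [Nat.add_sub_cancel' hin] using
        add_mul_le_of_succ_add_le hstep (i := i) (d := n - i) (by omega) (by omega)
    exact rhoTop_le_one_div_mul_pow hl.le hδ.le (by linarith)
  have hgeom : ∑ i ∈ Icc 2 n, r ^ (n - i) ≤ (1 - r)⁻¹ :=
    sum_pow_le_inv_one_sub (exp_pos _).le hr1 fun i hi j hj hij => by
      simp only [coe_Icc, Set.mem_Icc] at hi hj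
      omega
  rw [sum_Icc_succ_top (by omega)]
  calc ∑ i ∈ Icc 2 n, rhoTop l θ (b i) + rhoTop l θ (b (n + 1))
      ≤ ∑ i ∈ Icc 2 n, 1 / l * r ^ (n - i) + 1 / l :=
        add_le_add (sum_le_sum hinner) (rhoTop_le_one_div hl.le _ _)
    _ ≤ 1 / l * (1 - r)⁻¹ + 1 / l := by
        rw [← mul_sum]
        exact add_le_add_left (mul_le_mul_of_nonneg_left hgeom (by positivity)) _
    _ = 1 / l + 1 / l * (1 - r)⁻¹ := add_comm _ _

theorem one_add_inv_one_sub_exp_neg {a : ℝ} (ha : a ≠ 0) :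
    1 + (1 - exp (-a))⁻¹ = (2 * exp a - 1) / (exp a - 1) := by
  have hne : exp a - 1 ≠ 0 := sub_ne_zero.mpr fun h => ha (exp_eq_one_iff a |>.mp h)
  rw [exp_neg]
  field_simp
  ring

/-- The geometric-series bound of the PrivTree privacy proof: if the biased counts
`b₁ ≥ b₂ ≥ … ≥ b_m` decrease by at least `δ` at each step and `b_{m-1} ≥ θ + 1`
(when `m ≥ 2`), then `Σ_{i=2}^m ρ⊤_{λ,θ}(b_i) ≤ 1/λ + (1/λ)·1/(1 - e^{-δ/λ})`,
which equals `(1/λ)·(2e^{δ/λ} - 1)/(e^{δ/λ} - 1)`. -/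
theorem stmt_7 (l δ θ : ℝ) (hl : 0 < l) (hδ : 0 < δ) (m : ℕ) (b : ℕ → ℝ)
    (hdec : ∀ i : ℕ, 2 ≤ i → i ≤ m → b i + δ ≤ b (i - 1))
    (hlast : 2 ≤ m → θ + 1 ≤ b (m - 1)) :
    (∑ i ∈ Finset.Icc 2 m, rhoTop l θ (b i)) ≤
      1 / l + (1 / l) * (1 / (1 - Real.exp (-δ / l))) ∧
    1 / l + (1 / l) * (1 / (1 - Real.exp (-δ / l))) =
      (1 / l) * (2 * Real.exp (δ / l) - 1) / (Real.exp (δ / l) - 1) := by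
  rw [one_div (1 - _)]
  refine ⟨sum_rhoTop_le hl hδ hdec hlast, ?_⟩
  rw [neg_div, mul_div_assoc, ← one_add_inv_one_sub_exp_neg (div_pos hδ hl).ne', mul_add, mul_one]
end
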